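/- For each nonzero real number t, define f : SU(2) → ℂ on elements g = (α, β; −conj(β), conj(α)) with |α|² + |β|² = 1 by f(g) = Re(α² + β²). Then for every θ ∈ ℝ, the operator T_θ = P·λ(d_θ)·P on L²(SU(2)) satisfies T_θ f = cos(2θ)·f, where λ is the left regular representation, d_θ = diag(e^{iθ}, e^{−iθ}), and P = ∫_{SO(2)} λ(r_s) ds is the orthogonal projection onto left-SO(2)-invariant functions (SO(2) embedded as {r_s} with normalized Haar measure). Consequently, the operator norm of T_θ − T_{π/4} on L²(SU(2)) is at least |cos(2θ)|. -/

import Mathlib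

open Matrix Real MeasureTheory

/-- r_s = (cos s, −sin s; sin s, cos s) ∈ SU(2). -/
noncomputable def rotC (s : ℝ) : Matrix (Fin 2) (Fin 2) ℂ :=
  !![(Real.cos s : ℂ), -(Real.sin s : ℂ); (Real.sin s : ℂ), (Real.cos s : ℂ)]

/-- d_θ = diag(e^{iθ}, e^{−iθ}) ∈ SU(2). -/
noncomputable def dC (θ : ℝ) : Matrix (Fin 2) (Fin 2) ℂ :=
  !![Complex.exp (Complex.I * θ), 0; 0, Complex.exp (-(Complex.I * θ))]

/-- SU(2) as a set of matrices. -/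
noncomputable def SU2 : Set (Matrix (Fin 2) (Fin 2) ℂ) :=
  {g | g ∈ Matrix.specialUnitaryGroup (Fin 2) ℂ}

/-- The function f(g) = Re(α² + β²) for g = (α, β; −conj β, conj α). -/
noncomputable def fEig (g : Matrix (Fin 2) (Fin 2) ℂ) : ℝ :=
  ((g 0 0) ^ 2 + (g 0 1) ^ 2).re

/-- (T_θ ξ)(x) = (P λ(d_θ) P ξ)(x), written out as a double average over the
subgroup {r_s}, applied to the function `fEig`. -/
noncomputable def TfEig (θ : ℝ) (x : Matrix (Fin 2) (Fin 2) ℂ) : ℝ :=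
  (1 / (2 * π)) ^ 2 *
    ∫ s in (0:ℝ)..(2 * π), ∫ t in (0:ℝ)..(2 * π),
      fEig (rotC (-t) * dC (-θ) * rotC (-s) * x)

/-! Write `fEig g = Re (g gᵀ)₀₀`. Conjugating a matrix by the rotations `r_t` and averaging over
the circle replaces each diagonal entry by half the trace. Applied twice, this turns the double
average defining `T_θ f` at `x` into `Re (½ tr d_θ² · ½ tr (x xᵀ))`; here `tr d_θ² = 2 cos 2θ`,
and `tr (x xᵀ) = 2 f(x)` because the second row of `x ∈ SU(2)` is `(-conj β, conj α)`.

For `∫ f² > 0`: a left-invariant probability measure on `SU(2)` charges every open neighbourhood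
of `1`, since countably many of its translates cover `SU(2)`; and `f² > 0` near `f(1) = 1`. -/

theorem integral_cos_sq_add_sin_sq_add_sin_mul_cos {E : Type*} [NormedAddCommGroup E]
    [NormedSpace ℝ E] [CompleteSpace E] (a b c : E) :
    ∫ t in (0:ℝ)..(2 * π), (cos t ^ 2 • a + sin t ^ 2 • b + (sin t * cos t) • c) =
      π • (a + b) := by
  have hcos : ∫ t in (0:ℝ)..(2 * π), cos t ^ 2 = π := by simp [integral_cos_sq]
  have hsin : ∫ t in (0:ℝ)..(2 * π), sin t ^ 2 = π := by simp [integral_sin_sq]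
  have hsincos : ∫ t in (0:ℝ)..(2 * π), sin t * cos t = 0 := by simp [integral_sin_mul_cos₁]
  have hint : ∀ f : ℝ → ℝ, Continuous f → ∀ v : E,
      IntervalIntegrable (fun t => f t • v) volume 0 (2 * π) :=
    fun f hf v => (hf.smul continuous_const).intervalIntegrable _ _
  rw [intervalIntegral.integral_add, intervalIntegral.integral_add,
    intervalIntegral.integral_smul_const, intervalIntegral.integral_smul_const,
    intervalIntegral.integral_smul_const, hcos, hsin, hsincos, zero_smul, add_zero, smul_add]
  all_goals first
    | exact hint _ (by fun_prop) _
    | exact (hint _ (by fun_prop) _).add (hint _ (by fun_prop) _)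

theorem rotC_neg_mul_mul_transpose_apply_zero_zero (t : ℝ) (M : Matrix (Fin 2) (Fin 2) ℂ) :
    (rotC (-t) * M * (rotC (-t))ᵀ) 0 0 =
      cos t ^ 2 • M 0 0 + sin t ^ 2 • M 1 1 + (sin t * cos t) • (M 0 1 + M 1 0) := by
  simp only [rotC, cos_neg, Complex.ofReal_cos, sin_neg, Complex.ofReal_neg, Complex.ofReal_sin,
    neg_neg, cons_mul, Nat.succ_eq_add_one, Nat.reduceAdd, empty_mul, Equiv.symm_apply_apply,
    Matrix.mul_apply, of_apply, cons_val', vecMul, dotProduct, Fin.sum_univ_two, cons_val_zero,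
    cons_val_one, cons_val_fin_one, neg_mul, transpose_apply, Complex.real_smul,
    Complex.ofReal_pow, smul_add, Complex.ofReal_mul]
  ring

theorem rotC_neg_mul_mul_transpose_apply_one_one (t : ℝ) (M : Matrix (Fin 2) (Fin 2) ℂ) :
    (rotC (-t) * M * (rotC (-t))ᵀ) 1 1 =
      cos t ^ 2 • M 1 1 + sin t ^ 2 • M 0 0 + (sin t * cos t) • -(M 0 1 + M 1 0) := by
  simp only [rotC, cos_neg, Complex.ofReal_cos, sin_neg, Complex.ofReal_neg, Complex.ofReal_sin,
    neg_neg, cons_mul, Nat.succ_eq_add_one, Nat.reduceAdd, empty_mul, Equiv.symm_apply_apply,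
    Matrix.mul_apply, of_apply, cons_val', vecMul, dotProduct, Fin.sum_univ_two, cons_val_zero,
    cons_val_one, cons_val_fin_one, neg_mul, transpose_apply, mul_neg, Complex.real_smul,
    Complex.ofReal_pow, neg_add_rev, smul_add, smul_neg, Complex.ofReal_mul]
  ring

theorem integral_re_rotC_neg_mul_mul_transpose_apply_self (M : Matrix (Fin 2) (Fin 2) ℂ)
    (i : Fin 2) :
    ∫ t in (0:ℝ)..(2 * π), ((rotC (-t) * M * (rotC (-t))ᵀ) i i).re = π * M.trace.re := by
  fin_cases i
  · simp only [Fin.zero_eta, rotC_neg_mul_mul_transpose_apply_zero_zero, Complex.add_re,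
      Complex.smul_re, integral_cos_sq_add_sin_sq_add_sin_mul_cos]
    simp [trace_fin_two]
  · simp only [Fin.mk_one, rotC_neg_mul_mul_transpose_apply_one_one, Complex.add_re,
      Complex.smul_re, integral_cos_sq_add_sin_sq_add_sin_mul_cos]
    simp [trace_fin_two, add_comm]

@[fun_prop]
theorem continuous_rotC : Continuous rotC := by
  unfold rotC; fun_prop

theorem fEig_eq_re_mul_transpose (g : Matrix (Fin 2) (Fin 2) ℂ) :
    fEig g = ((g * gᵀ) 0 0).re := by
  simp [fEig, Matrix.mul_apply, Fin.sum_univ_two, sq]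

theorem star_eq_adjugate_of_mem_SU2 {x : Matrix (Fin 2) (Fin 2) ℂ} (hx : x ∈ SU2) :
    star x = x.adjugate := by
  obtain ⟨hunit, hdet⟩ := Matrix.mem_specialUnitaryGroup_iff.1 hx
  rw [← Matrix.inv_eq_left_inv (Matrix.mem_unitaryGroup_iff'.1 hunit), Matrix.inv_def, hdet]
  simp

theorem apply_one_of_mem_SU2 {x : Matrix (Fin 2) (Fin 2) ℂ} (hx : x ∈ SU2) :
    x 1 0 = -star (x 0 1) ∧ x 1 1 = star (x 0 0) := by
  have h := star_eq_adjugate_of_mem_SU2 hx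
  rw [Matrix.adjugate_fin_two] at h
  have h01 := congrFun (congrFun h 0) 1
  have h00 := congrFun (congrFun h 0) 0
  simp only [star_apply, RCLike.star_def, of_apply, cons_val', cons_val_one, cons_val_fin_one,
    cons_val_zero] at h01 h00
  constructor
  · simpa using congrArg star h01
  · exact h00.symm

theorem trace_mul_transpose_of_mem_SU2 {x : Matrix (Fin 2) (Fin 2) ℂ} (hx : x ∈ SU2) :
    (x * xᵀ).trace = ((2 * fEig x : ℝ) : ℂ) := by
  obtain ⟨h10, h11⟩ := apply_one_of_mem_SU2 hx
  set A := x 0 0 ^ 2 + x 0 1 ^ 2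
  calc (x * xᵀ).trace = A + (x 1 0 ^ 2 + x 1 1 ^ 2) := by
        simp [A, trace_fin_two, Matrix.mul_apply, Fin.sum_univ_two, sq]
    _ = A + starRingEnd ℂ A := by rw [h10, h11]; simp only [RCLike.star_def, even_two, Even.neg_pow, map_add, map_pow, A]; ring
    _ = ((2 * fEig x : ℝ) : ℂ) := by rw [Complex.add_conj, fEig]

theorem trace_dC_mul_mul_transpose (θ : ℝ) (N : Matrix (Fin 2) (Fin 2) ℂ) :
    (dC θ * N * (dC θ)ᵀ).trace = ∑ i, dC θ i i ^ 2 * N i i := by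
  simp only [dC, cons_mul, Nat.succ_eq_add_one, Nat.reduceAdd, empty_mul, Equiv.symm_apply_apply,
    vecMul_vecMul, trace_fin_two, of_apply, cons_val', vecMul, dotProduct, Matrix.mul_apply,
    transpose_apply, cons_val_fin_one, cons_val_zero, Fin.sum_univ_two, cons_val_one, mul_zero,
    add_zero, zero_mul, zero_add]
  ring

theorem re_dC_apply_self_sq (θ : ℝ) (i : Fin 2) : (dC θ i i ^ 2).re = cos (2 * θ) := by
  fin_cases i
  · have : Complex.exp (Complex.I * θ) ^ 2 = Complex.exp ((2 * θ : ℝ) * Complex.I) := by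
      rw [← Complex.exp_nat_mul]; push_cast; ring_nf
    change (Complex.exp (Complex.I * θ) ^ 2).re = _
    rw [this, Complex.exp_ofReal_mul_I_re]
  · have : Complex.exp (-(Complex.I * θ)) ^ 2 = Complex.exp ((-(2 * θ) : ℝ) * Complex.I) := by
      rw [← Complex.exp_nat_mul]; push_cast; ring_nf
    change (Complex.exp (-(Complex.I * θ)) ^ 2).re = _
    rw [this, Complex.exp_ofReal_mul_I_re, cos_neg]

theorem integral_fEig_rotC_neg_mul (y : Matrix (Fin 2) (Fin 2) ℂ) :
    ∫ t in (0:ℝ)..(2 * π), fEig (rotC (-t) * y) = π * (y * yᵀ).trace.re := by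
  have hconj : ∀ t, (rotC (-t) * y) * (rotC (-t) * y)ᵀ = rotC (-t) * (y * yᵀ) * (rotC (-t))ᵀ :=
    fun t => by simp only [transpose_mul, Matrix.mul_assoc]
  simp_rw [fEig_eq_re_mul_transpose, hconj]
  exact integral_re_rotC_neg_mul_mul_transpose_apply_self _ 0

theorem TfEig_eq_cos_mul_fEig (θ : ℝ) {x : Matrix (Fin 2) (Fin 2) ℂ} (hx : x ∈ SU2) :
    TfEig θ x = cos (2 * θ) * fEig x := by
  have hinner : ∀ s, ∫ t in (0:ℝ)..(2 * π), fEig (rotC (-t) * dC (-θ) * rotC (-s) * x) =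
      π * ∑ i, ((rotC (-s) * (dC (-θ) i i ^ 2 • (x * xᵀ)) * (rotC (-s))ᵀ) i i).re := by
    intro s
    have hassoc : ∀ t, rotC (-t) * dC (-θ) * rotC (-s) * x =
        rotC (-t) * (dC (-θ) * (rotC (-s) * x)) := fun t => by simp only [Matrix.mul_assoc]
    have hy : (dC (-θ) * (rotC (-s) * x)) * (dC (-θ) * (rotC (-s) * x))ᵀ =
        dC (-θ) * (rotC (-s) * (x * xᵀ) * (rotC (-s))ᵀ) * (dC (-θ))ᵀ := by
      simp only [transpose_mul, Matrix.mul_assoc]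
    simp only [hassoc, integral_fEig_rotC_neg_mul, hy, trace_dC_mul_mul_transpose, Complex.re_sum,
      Matrix.mul_smul, Matrix.smul_mul, Matrix.smul_apply, smul_eq_mul]
  have houter : ∫ s in (0:ℝ)..(2 * π),
      ∑ i, ((rotC (-s) * (dC (-θ) i i ^ 2 • (x * xᵀ)) * (rotC (-s))ᵀ) i i).re =
      ∑ i, π * (dC (-θ) i i ^ 2 * (x * xᵀ).trace).re := by
    rw [intervalIntegral.integral_finsetSum fun i _ =>
      (by fun_prop : Continuous _).intervalIntegrable _ _]
    simp only [integral_re_rotC_neg_mul_mul_transpose_apply_self, trace_smul, smul_eq_mul]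
  rw [TfEig, intervalIntegral.integral_congr fun s _ => hinner s,
    intervalIntegral.integral_const_mul, houter, trace_mul_transpose_of_mem_SU2 hx]
  simp only [Complex.re_mul_ofReal, re_dC_apply_self_sq, Fin.sum_univ_two, mul_neg, cos_neg]
  field_simp
  ring

theorem star_mul_self_of_mem_SU2 {x : Matrix (Fin 2) (Fin 2) ℂ} (hx : x ∈ SU2) : star x * x = 1 :=
  Matrix.mem_unitaryGroup_iff'.1 (Matrix.mem_specialUnitaryGroup_iff.1 hx).1

theorem star_mem_SU2 {x : Matrix (Fin 2) (Fin 2) ℂ} (hx : x ∈ SU2) : star x ∈ SU2 :=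
  (star (⟨x, hx⟩ : Matrix.specialUnitaryGroup (Fin 2) ℂ)).2

theorem abs_fEig_le_one {x : Matrix (Fin 2) (Fin 2) ℂ} (hx : x ∈ SU2) : |fEig x| ≤ 1 := by
  have hdet : x.det = 1 := (Matrix.mem_specialUnitaryGroup_iff.1 hx).2
  obtain ⟨h10, h11⟩ := apply_one_of_mem_SU2 hx
  rw [det_fin_two, h10, h11] at hdet
  have hnorm : ‖x 0 0‖ ^ 2 + ‖x 0 1‖ ^ 2 = 1 := by
    rw [mul_neg, sub_neg_eq_add, Complex.star_def, Complex.mul_conj', Complex.mul_conj'] at hdet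
    exact_mod_cast hdet
  calc |fEig x| ≤ ‖x 0 0 ^ 2 + x 0 1 ^ 2‖ := Complex.abs_re_le_norm _
    _ ≤ ‖x 0 0‖ ^ 2 + ‖x 0 1‖ ^ 2 :=
        (norm_add_le _ _).trans_eq (by rw [norm_pow, norm_pow])
    _ = 1 := hnorm

theorem continuous_fEig : Continuous fEig := by
  unfold fEig; fun_prop

theorem fEig_one : fEig 1 = 1 := by
  simp [fEig]

instance {m n R : Type*} [Countable m] [Countable n] [TopologicalSpace R]
    [SecondCountableTopology R] : SecondCountableTopology (Matrix m n R) :=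
  inferInstanceAs (SecondCountableTopology (m → n → R))

section HaarOnSU2

variable [MeasurableSpace (Matrix (Fin 2) (Fin 2) ℂ)] [BorelSpace (Matrix (Fin 2) (Fin 2) ℂ)]
  {μ : Measure (Matrix (Fin 2) (Fin 2) ℂ)} [IsProbabilityMeasure μ]

theorem integrable_fEig_sq (hsupp : μ SU2ᶜ = 0) : Integrable (fun x => fEig x ^ 2) μ := by
  refine Integrable.mono' (integrable_const 1) (continuous_fEig.pow 2).aestronglyMeasurable ?_
  filter_upwards [mem_ae_iff.2 hsupp] with x hx
  rw [norm_pow, Real.norm_eq_abs]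
  exact pow_le_one₀ (abs_nonneg _) (abs_fEig_le_one hx)

theorem measure_pos_of_isOpen_of_one_mem (hsupp : μ SU2ᶜ = 0)
    (hinv : ∀ g ∈ SU2, ∀ A : Set (Matrix (Fin 2) (Fin 2) ℂ), MeasurableSet A →
      μ ((fun x => g * x) ⁻¹' A) = μ A)
    {U : Set (Matrix (Fin 2) (Fin 2) ℂ)} (hU : IsOpen U) (h1 : 1 ∈ U) : 0 < μ U := by
  by_contra! hUnull
  have hcover : SU2 ⊆ ⋃ g : SU2, (fun x => g.1 * x) ⁻¹' U := fun x hx =>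
    Set.mem_iUnion.2 ⟨⟨star x, star_mem_SU2 hx⟩, by simpa [star_mul_self_of_mem_SU2 hx]⟩
  obtain ⟨T, hT, hTU⟩ := TopologicalSpace.isOpen_iUnion_countable
    (fun g : SU2 => (fun x => g.1 * x) ⁻¹' U) fun g => hU.preimage (continuous_const_mul g.1)
  have hSU2 : μ SU2 = 0 := measure_mono_null (hTU ▸ hcover)
    ((measure_biUnion_null_iff hT).2 fun g _ => (hinv g g.2 U hU.measurableSet).trans
      (nonpos_iff_eq_zero.1 hUnull))
  simpa using measure_union_null hSU2 hsupp

theorem integral_fEig_sq_pos (hsupp : μ SU2ᶜ = 0)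
    (hinv : ∀ g ∈ SU2, ∀ A : Set (Matrix (Fin 2) (Fin 2) ℂ), MeasurableSet A →
      μ ((fun x => g * x) ⁻¹' A) = μ A) :
    0 < ∫ x, fEig x ^ 2 ∂μ := by
  rw [integral_pos_iff_support_of_nonneg (fun x => sq_nonneg _) (integrable_fEig_sq hsupp)]
  exact measure_pos_of_isOpen_of_one_mem hsupp hinv (continuous_fEig.pow 2).isOpen_support
    (by simp [fEig_one])

end HaarOnSU2

/-- T_θ f = cos(2θ)·f on SU(2), and consequently, with respect to any Haar
(left-invariant) probability measure μ on SU(2), the norm of T_θ − T_{π/4}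
on L²(SU(2)) is at least |cos(2θ)|. -/
theorem T_theta_eigenfunction_and_norm_lower_bound
    [MeasurableSpace (Matrix (Fin 2) (Fin 2) ℂ)]
    [BorelSpace (Matrix (Fin 2) (Fin 2) ℂ)]
    (μ : Measure (Matrix (Fin 2) (Fin 2) ℂ)) [IsProbabilityMeasure μ]
    (hsupp : μ SU2ᶜ = 0)
    (hinv : ∀ g ∈ SU2, ∀ A : Set (Matrix (Fin 2) (Fin 2) ℂ), MeasurableSet A →
      μ ((fun x => g * x) ⁻¹' A) = μ A) :
    (∀ θ : ℝ, ∀ x ∈ SU2, TfEig θ x = Real.cos (2 * θ) * fEig x) ∧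
      (0 < ∫ x, fEig x ^ 2 ∂μ) ∧
      (∀ θ : ℝ,
        |Real.cos (2 * θ)| * Real.sqrt (∫ x, fEig x ^ 2 ∂μ) ≤
          Real.sqrt (∫ x, (TfEig θ x - TfEig (π / 4) x) ^ 2 ∂μ)) := by
  refine ⟨fun θ x hx => TfEig_eq_cos_mul_fEig θ hx, integral_fEig_sq_pos hsupp hinv, fun θ => ?_⟩
  have hdiff : (fun x => (TfEig θ x - TfEig (π / 4) x) ^ 2) =ᵐ[μ]
      fun x => cos (2 * θ) ^ 2 * fEig x ^ 2 := by
    filter_upwards [mem_ae_iff.2 hsupp] with x hx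
    rw [TfEig_eq_cos_mul_fEig θ hx, TfEig_eq_cos_mul_fEig (π / 4) hx,
      show 2 * (π / 4) = π / 2 by ring, cos_pi_div_two]
    ring
  rw [integral_congr_ae hdiff, integral_const_mul, sqrt_mul (sq_nonneg _), sqrt_sq_eq_abs]
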